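/- arXiv:2512.07617 — 6 statements merged into one kernel-verified Lean document; each statement's English description precedes it below -/
import Mathlib

section
/- Let C_H ≥ 0 and C_S be bounded self-adjoint resp. skew-adjoint operators on H, C_η = η C_S + C_H, and suppose C = C_S + C_H is hypocoercive with index m with constant κ. Then there exists R ≥ 1 such that for every y ∈ H and every ℓ ∈ {0,…,m} with ⟨C_S^ℓ y, C_H C_S^ℓ y⟩ ≥ (κ/(m+1))‖y‖², and every real η with |η| ≥ R, one has ⟨C_η^ℓ y, C_H C_η^ℓ y⟩ ≥ (1/2)·η^{2ℓ}·⟨C_S^ℓ y, C_H C_S^ℓ y⟩. -/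
/-!
Write `(c • S + T) ^ ℓ = c ^ ℓ • S ^ ℓ + D`. Expanding `(A + B) ^ (n + 1)` noncommutatively gives
`‖(A + B) ^ (n + 1) - A ^ (n + 1)‖ ≤ (n + 1) ‖B‖ (‖A‖ + ‖B‖) ^ n`, so `‖D‖ = O(|c| ^ (ℓ - 1))` for
`|c| ≥ 1`. Because the quadratic form of `T` is nonnegative, adding `D y` to `u = c ^ ℓ • S ^ ℓ y`
lowers it by at most the cross terms `2 ‖T‖ ‖u‖ ‖D y‖ ≤ K |c| ^ (2ℓ - 1) ‖y‖²`, with `K` uniform in `ℓ ≤ m`. When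
`⟪S ^ ℓ y, T S ^ ℓ y⟫ ≥ μ ‖y‖²`, this error is at most half of the main term
`|c| ^ (2ℓ) ⟪S ^ ℓ y, T S ^ ℓ y⟫` as soon as `|c| ≥ 2K / μ`.
-/

open scoped ComplexInnerProductSpace

section NormedRing

variable {R : Type*} [NormedRing R]

theorem norm_add_pow_succ_sub_pow_succ_le {A B : R} {α β : ℝ} (hA : ‖A‖ ≤ α) (hB : ‖B‖ ≤ β)
    (n : ℕ) : ‖(A + B) ^ (n + 1) - A ^ (n + 1)‖ ≤ (n + 1) * β * (α + β) ^ n := by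
  have hα : 0 ≤ α := (norm_nonneg A).trans hA
  have hβ : 0 ≤ β := (norm_nonneg B).trans hB
  have hAB : ‖A + B‖ ≤ α + β := (norm_add_le A B).trans (add_le_add hA hB)
  induction n with
  | zero => simpa using hB
  | succ n ih =>
    have hsplit : (A + B) ^ (n + 2) - A ^ (n + 2)
        = (A + B) * ((A + B) ^ (n + 1) - A ^ (n + 1)) + B * A ^ (n + 1) := by
      rw [pow_succ' (A + B) (n + 1), pow_succ' A (n + 1)]
      noncomm_ring
    have hAn : ‖A ^ (n + 1)‖ ≤ (α + β) ^ (n + 1) :=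
      (norm_pow_le' A n.succ_pos).trans (pow_le_pow_left₀ (norm_nonneg A) (by linarith) _)
    calc ‖(A + B) ^ (n + 2) - A ^ (n + 2)‖
        ≤ ‖A + B‖ * ‖(A + B) ^ (n + 1) - A ^ (n + 1)‖ + ‖B‖ * ‖A ^ (n + 1)‖ := by
          rw [hsplit]
          exact (norm_add_le _ _).trans (add_le_add (norm_mul_le _ _) (norm_mul_le _ _))
      _ ≤ (α + β) * ((n + 1) * β * (α + β) ^ n) + β * (α + β) ^ (n + 1) := by
          gcongr
      _ = (↑(n + 1) + 1) * β * (α + β) ^ (n + 1) := by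
          push_cast
          ring

variable {𝕜 : Type*} [NormedField 𝕜] [NormedAlgebra 𝕜 R]

theorem norm_mul_norm_smul_add_pow_sub_le {c : 𝕜} (hc : 1 ≤ ‖c‖) (S T : R) (ℓ : ℕ) :
    ‖c‖ * ‖(c • S + T) ^ ℓ - c ^ ℓ • S ^ ℓ‖ ≤ ℓ * (‖S‖ + ‖T‖) ^ ℓ * ‖c‖ ^ ℓ := by
  cases ℓ with
  | zero => simp
  | succ n =>
    have hT : ‖T‖ ≤ ‖S‖ + ‖T‖ := le_add_of_nonneg_left (norm_nonneg S)
    have hsum : ‖c‖ * ‖S‖ + ‖T‖ ≤ ‖c‖ * (‖S‖ + ‖T‖) := by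
      nlinarith [norm_nonneg S, norm_nonneg T]
    rw [← smul_pow]
    calc ‖c‖ * ‖(c • S + T) ^ (n + 1) - (c • S) ^ (n + 1)‖
        ≤ ‖c‖ * ((n + 1) * ‖T‖ * (‖c‖ * ‖S‖ + ‖T‖) ^ n) := by
          gcongr
          exact norm_add_pow_succ_sub_pow_succ_le (norm_smul_le c S) le_rfl n
      _ ≤ ‖c‖ * ((n + 1) * (‖S‖ + ‖T‖) * (‖c‖ * (‖S‖ + ‖T‖)) ^ n) := by
          gcongr
      _ = ↑(n + 1) * (‖S‖ + ‖T‖) ^ (n + 1) * ‖c‖ ^ (n + 1) := by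
          push_cast
          rw [mul_pow]
          ring

end NormedRing

section InnerProductSpace

variable {𝕜 E : Type*} [RCLike 𝕜] [NormedAddCommGroup E] [InnerProductSpace 𝕜 E]

open RCLike

open scoped InnerProductSpace

theorem re_inner_smul_map_smul (T : E →L[𝕜] E) (c : 𝕜) (x : E) :
    re ⟪c • x, T (c • x)⟫_𝕜 = ‖c‖ ^ 2 * re ⟪x, T x⟫_𝕜 := by
  rw [map_smul, inner_smul_left, inner_smul_right, ← mul_assoc, RCLike.conj_mul, ← ofReal_pow,
    re_ofReal_mul]

theorem abs_re_inner_map_le (T : E →L[𝕜] E) (x z : E) :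
    |re ⟪x, T z⟫_𝕜| ≤ ‖T‖ * ‖x‖ * ‖z‖ :=
  calc |re ⟪x, T z⟫_𝕜| ≤ ‖x‖ * ‖T z‖ := (abs_re_le_norm _).trans (norm_inner_le_norm x (T z))
    _ ≤ ‖x‖ * (‖T‖ * ‖z‖) := by gcongr; exact T.le_opNorm z
    _ = ‖T‖ * ‖x‖ * ‖z‖ := by ring

theorem re_inner_map_sub_le_re_inner_add_map_add {T : E →L[𝕜] E}
    (hT : ∀ x, 0 ≤ re ⟪x, T x⟫_𝕜) (u v : E) :
    re ⟪u, T u⟫_𝕜 - 2 * ‖T‖ * ‖u‖ * ‖v‖ ≤ re ⟪u + v, T (u + v)⟫_𝕜 := by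
  have hexp : re ⟪u + v, T (u + v)⟫_𝕜
      = re ⟪u, T u⟫_𝕜 + re ⟪u, T v⟫_𝕜 + re ⟪v, T u⟫_𝕜 + re ⟪v, T v⟫_𝕜 := by
    simp only [map_add, inner_add_left, inner_add_right]
    ring
  have huv := abs_le.mp (abs_re_inner_map_le T u v)
  have hvu := abs_le.mp (abs_re_inner_map_le T v u)
  linarith [hT v, huv.1, hvu.1]

theorem norm_mul_sub_re_inner_smul_add_pow_le {S T : E →L[𝕜] E} (hT : ∀ x, 0 ≤ re ⟪x, T x⟫_𝕜)
    {c : 𝕜} (hc : 1 ≤ ‖c‖) (y : E) (ℓ : ℕ) :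
    ‖c‖ * (‖c‖ ^ (2 * ℓ) * re ⟪(S ^ ℓ) y, T ((S ^ ℓ) y)⟫_𝕜
        - re ⟪((c • S + T) ^ ℓ) y, T (((c • S + T) ^ ℓ) y)⟫_𝕜)
      ≤ 2 * ‖T‖ * ℓ * (‖S‖ + ‖T‖) ^ (2 * ℓ) * ‖c‖ ^ (2 * ℓ) * ‖y‖ ^ 2 := by
  rcases Nat.eq_zero_or_pos ℓ with rfl | hℓ
  · simp
  set a := ‖S‖ + ‖T‖
  set D := (c • S + T) ^ ℓ - c ^ ℓ • S ^ ℓ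
  set u := c ^ ℓ • (S ^ ℓ) y
  have hdecomp : ((c • S + T) ^ ℓ) y = u + D y := by simp [u, D]
  have hu : ‖u‖ ≤ ‖c‖ ^ ℓ * (a ^ ℓ * ‖y‖) := by
    rw [norm_smul, norm_pow]
    gcongr
    refine ((S ^ ℓ).le_opNorm y).trans (mul_le_mul_of_nonneg_right ?_ (norm_nonneg y))
    exact (norm_pow_le' S hℓ).trans (pow_le_pow_left₀ (norm_nonneg S)
      (le_add_of_nonneg_right (norm_nonneg T)) ℓ)
  have hv : ‖c‖ * ‖D y‖ ≤ ℓ * a ^ ℓ * ‖c‖ ^ ℓ * ‖y‖ := by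
    calc ‖c‖ * ‖D y‖ ≤ ‖c‖ * ‖D‖ * ‖y‖ := by rw [mul_assoc]; gcongr; exact D.le_opNorm y
      _ ≤ ℓ * a ^ ℓ * ‖c‖ ^ ℓ * ‖y‖ :=
        mul_le_mul_of_nonneg_right (norm_mul_norm_smul_add_pow_sub_le hc S T ℓ) (norm_nonneg y)
  have hq := re_inner_map_sub_le_re_inner_add_map_add hT u (D y)
  rw [re_inner_smul_map_smul, norm_pow, ← pow_mul, mul_comm ℓ 2] at hq
  rw [hdecomp]
  calc _ ≤ ‖c‖ * (2 * ‖T‖ * ‖u‖ * ‖D y‖) := by gcongr; linarith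
    _ = 2 * ‖T‖ * ‖u‖ * (‖c‖ * ‖D y‖) := by ring
    _ ≤ 2 * ‖T‖ * (‖c‖ ^ ℓ * (a ^ ℓ * ‖y‖)) * (ℓ * a ^ ℓ * ‖c‖ ^ ℓ * ‖y‖) := by gcongr
    _ = _ := by ring

theorem exists_norm_mul_sub_re_inner_smul_add_pow_le {S T : E →L[𝕜] E}
    (hT : ∀ x, 0 ≤ re ⟪x, T x⟫_𝕜) (m : ℕ) :
    ∃ K : ℝ, ∀ ℓ ≤ m, ∀ c : 𝕜, 1 ≤ ‖c‖ → ∀ y : E,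
      ‖c‖ * (‖c‖ ^ (2 * ℓ) * re ⟪(S ^ ℓ) y, T ((S ^ ℓ) y)⟫_𝕜
          - re ⟪((c • S + T) ^ ℓ) y, T (((c • S + T) ^ ℓ) y)⟫_𝕜)
        ≤ K * ‖c‖ ^ (2 * ℓ) * ‖y‖ ^ 2 := by
  refine ⟨2 * ‖T‖ * m * (‖S‖ + ‖T‖ + 1) ^ (2 * m), fun ℓ hℓ c hc y => ?_⟩
  refine (norm_mul_sub_re_inner_smul_add_pow_le hT hc y ℓ).trans ?_
  have hpow : (‖S‖ + ‖T‖) ^ (2 * ℓ) ≤ (‖S‖ + ‖T‖ + 1) ^ (2 * m) :=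
    calc (‖S‖ + ‖T‖) ^ (2 * ℓ) ≤ (‖S‖ + ‖T‖ + 1) ^ (2 * ℓ) :=
          pow_le_pow_left₀ (by positivity) (le_add_of_nonneg_right zero_le_one) _
      _ ≤ (‖S‖ + ‖T‖ + 1) ^ (2 * m) :=
          pow_le_pow_right₀ (le_add_of_nonneg_left (by positivity)) (by omega)
  gcongr

end InnerProductSpace

theorem stmt3_general
    {H : Type*} [NormedAddCommGroup H] [InnerProductSpace ℂ H]
    (CH CS : H →L[ℂ] H)
    (hCHpos : ∀ x : H, 0 ≤ (⟪x, CH x⟫).re)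
    (m : ℕ) (κ : ℝ) (hκ : 0 < κ) :
    ∃ R : ℝ, 1 ≤ R ∧ ∀ (y : H) (ℓ : ℕ), ℓ ≤ m →
      κ / (m + 1) * ‖y‖ ^ 2 ≤ (⟪(CS ^ ℓ) y, CH ((CS ^ ℓ) y)⟫).re →
      ∀ η : ℝ, R ≤ |η| →
        (1 / 2) * η ^ (2 * ℓ) * (⟪(CS ^ ℓ) y, CH ((CS ^ ℓ) y)⟫).re
          ≤ (⟪(((η : ℂ) • CS + CH) ^ ℓ) y, CH ((((η : ℂ) • CS + CH) ^ ℓ) y)⟫).re := by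
  obtain ⟨K, hK⟩ := exists_norm_mul_sub_re_inner_smul_add_pow_le hCHpos (S := CS) m
  set μ := κ / (m + 1)
  have hμ : 0 < μ := by positivity
  refine ⟨max 1 (2 * K / μ), le_max_left _ _, fun y ℓ hℓ hP η hη => ?_⟩
  have hη1 : 1 ≤ |η| := (le_max_left _ _).trans hη
  have hKη : 2 * K ≤ μ * |η| := by
    rw [mul_comm μ, ← div_le_iff₀ hμ]; exact (le_max_right _ _).trans hη
  have herr := hK ℓ hℓ η (by simpa using hη1) y
  simp only [Complex.norm_real, Real.norm_eq_abs, RCLike.re_to_complex] at herr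
  rw [← (even_two_mul ℓ).pow_abs]
  set P := (⟪(CS ^ ℓ) y, CH ((CS ^ ℓ) y)⟫).re
  set E := |η| ^ (2 * ℓ)
  have hsmall : 2 * (K * E * ‖y‖ ^ 2) ≤ |η| * (E * P) :=
    calc 2 * (K * E * ‖y‖ ^ 2) = (2 * K) * (E * ‖y‖ ^ 2) := by ring
      _ ≤ μ * |η| * (E * ‖y‖ ^ 2) := by gcongr
      _ = |η| * (E * (μ * ‖y‖ ^ 2)) := by ring
      _ ≤ |η| * (E * P) := by gcongr
  refine le_of_mul_le_mul_left ?_ (zero_lt_one.trans_le hη1)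
  linarith

/-- Let `CH ≥ 0` self-adjoint, `CS` skew-adjoint, `C_η = η CS + CH`, and suppose
`C = CS + CH` is hypocoercive with index `m` and constant `κ`. Then there is `R ≥ 1` such
that for every `y`, every `ℓ ∈ {0,…,m}` with `⟨CS^ℓ y, CH CS^ℓ y⟩ ≥ (κ/(m+1))‖y‖²`, and
every `|η| ≥ R`: `⟨C_η^ℓ y, CH C_η^ℓ y⟩ ≥ (1/2) η^{2ℓ} ⟨CS^ℓ y, CH CS^ℓ y⟩`. -/
theorem stmt3
    {H : Type*} [NormedAddCommGroup H] [InnerProductSpace ℂ H] [CompleteSpace H]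
    (CH CS : H →L[ℂ] H)
    (hCH : IsSelfAdjoint CH)
    (hCHpos : ∀ x : H, 0 ≤ (⟪x, CH x⟫).re)
    (hCS : ContinuousLinearMap.adjoint CS = -CS)
    (m : ℕ) (κ : ℝ) (hκ : 0 < κ)
    (hhypo : ∀ x : H, κ * ‖x‖ ^ 2 ≤ ∑ j ∈ Finset.range (m + 1), (⟪(CS ^ j) x, CH ((CS ^ j) x)⟫).re) :
    ∃ R : ℝ, 1 ≤ R ∧ ∀ (y : H) (ℓ : ℕ), ℓ ≤ m →
      κ / (m + 1) * ‖y‖ ^ 2 ≤ (⟪(CS ^ ℓ) y, CH ((CS ^ ℓ) y)⟫).re →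
      ∀ η : ℝ, R ≤ |η| →
        (1 / 2) * η ^ (2 * ℓ) * (⟪(CS ^ ℓ) y, CH ((CS ^ ℓ) y)⟫).re
          ≤ (⟪(((η : ℂ) • CS + CH) ^ ℓ) y, CH ((((η : ℂ) • CS + CH) ^ ℓ) y)⟫).re :=
  stmt3_general CH CS hCHpos m κ hκ
end

section
/- Let C ∈ B(H) be accretive and hypocoercive with index m, and C_η = η C_S + C_H. Then for every R ≥ 1 there exists μ > 0 such that for all y ∈ H and all real η with 1 ≤ |η| ≤ R: Σ_{j=0}^{m} η^{−2j} ⟨C_η^j y, C_H C_η^j y⟩ ≥ μ ‖y‖². -/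
/-!
Write `CH = S† S`, so that `re ⟪v, CH v⟫ = ‖S v‖²`, and put `ε = η⁻¹`, `D = CS + ε CH`. Then
`(η CS + CH)ʲ = ηʲ Dʲ`, so the sum to be bounded is `∑ ‖S Dʲ y‖²`. Since `CS = D - ε CH` and `CH`
factors through `S`, each `‖S CSʲ y‖` is bounded by `Kʲ ∑_{i ≤ j} ‖S Dⁱ y‖` with `K` depending only on
`‖S‖`, `‖CS‖`, `‖CH‖` and `m`, as long as `|ε| ≤ 1`. Squaring and summing turns the hypocoercivity
bound for `CS` into the one for `D`, with `μ = κ / ((m + 1) Kᵐ)²`.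
-/

open Finset
open scoped ComplexInnerProductSpace

lemma smul_add_pow_eq_smul_pow {𝕜 A : Type*} [Field 𝕜] [Ring A] [Algebra 𝕜 A] {a b : A} {η : 𝕜}
    (hη : η ≠ 0) (j : ℕ) : (η • a + b) ^ j = η ^ j • (a + η⁻¹ • b) ^ j := by
  rw [← smul_pow, smul_add, smul_smul, mul_inv_cancel₀ hη, one_smul]

section Perturbation

variable {𝕜 E F : Type*} [NontriviallyNormedField 𝕜] [NormedAddCommGroup E] [NormedSpace 𝕜 E]
  [NormedAddCommGroup F] [NormedSpace 𝕜 F]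

lemma ContinuousLinearMap.opNorm_pow_le (D : E →L[𝕜] E) (i : ℕ) : ‖D ^ i‖ ≤ ‖D‖ ^ i := by
  rcases i.eq_zero_or_pos with rfl | hi
  · rw [pow_zero, pow_zero]
    exact ContinuousLinearMap.norm_id_le
  · exact norm_pow_le' D hi

lemma norm_apply_pow_apply_le_add (A B : E →L[𝕜] E) (S : E →L[𝕜] F) (ε : 𝕜) (i : ℕ) (x : E) :
    ‖S (((A + ε • B) ^ i) (A x))‖ ≤
      ‖S (((A + ε • B) ^ (i + 1)) x)‖ + ‖ε‖ * ‖S (((A + ε • B) ^ i) (B x))‖ := by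
  have h : S (((A + ε • B) ^ i) (A x)) =
      S (((A + ε • B) ^ (i + 1)) x) - ε • S (((A + ε • B) ^ i) (B x)) := by
    rw [pow_succ, mul_apply_eq_comp, add_apply, smul_apply, map_add, map_smul, map_add, map_smul,
      add_sub_cancel_right]
  rw [h, ← norm_smul]
  exact norm_sub_le _ _

lemma norm_apply_pow_le_mul_sum_of_perturbation {A B : E →L[𝕜] E} (S : E →L[𝕜] F) {ε : 𝕜}
    (hε : ‖ε‖ ≤ 1) {m : ℕ} {c : ℝ} (hc0 : 0 ≤ c)
    (hc : ∀ i < m, ∀ x, ‖S (((A + ε • B) ^ i) (B x))‖ ≤ c * ‖S x‖) :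
    ∀ j ≤ m, ∀ x, ‖S ((A ^ j) x)‖ ≤
      (1 + (m + 1) * c) ^ j * ∑ i ∈ range (j + 1), ‖S (((A + ε • B) ^ i) x)‖ := by
  set D := A + ε • B
  set K : ℝ := 1 + (m + 1) * c
  intro j
  induction j with
  | zero => simp
  | succ j ih =>
    intro hj x
    set P := ∑ i ∈ range (j + 2), ‖S ((D ^ i) x)‖
    have hP : P = ∑ i ∈ range (j + 1), ‖S ((D ^ (i + 1)) x)‖ + ‖S x‖ := by
      simp [P, sum_range_succ' _ (j + 1)]
    have hSx : ‖S x‖ ≤ P := by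
      rw [hP]; exact le_add_of_nonneg_left (sum_nonneg fun _ _ => norm_nonneg _)
    have hstep : ∑ i ∈ range (j + 1), ‖S ((D ^ i) (A x))‖ ≤ K * P := calc
      _ ≤ ∑ i ∈ range (j + 1), (‖S ((D ^ (i + 1)) x)‖ + c * ‖S x‖) := by
          refine sum_le_sum fun i hi => (norm_apply_pow_apply_le_add A B S ε i x).trans ?_
          exact add_le_add le_rfl ((mul_le_of_le_one_left (norm_nonneg _) hε).trans
            (hc i (by simp at hi; omega) x))
      _ = P - ‖S x‖ + (j + 1) * (c * ‖S x‖) := by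
          rw [sum_add_distrib, sum_const, card_range, nsmul_eq_mul, hP]; push_cast; ring
      _ ≤ P + (m + 1) * c * P := by
          have hjm : (j + 1 : ℝ) ≤ m + 1 := by exact_mod_cast Nat.succ_le_succ (by omega : j ≤ m)
          have := mul_le_mul hjm (mul_le_mul_of_nonneg_left hSx hc0) (by positivity) (by positivity)
          linarith [norm_nonneg (S x)]
      _ = K * P := by ring
    have hK : 0 ≤ K := by positivity
    calc ‖S ((A ^ (j + 1)) x)‖ = ‖S ((A ^ j) (A x))‖ := by rw [pow_succ, mul_apply_eq_comp]
      _ ≤ K ^ j * ∑ i ∈ range (j + 1), ‖S ((D ^ i) (A x))‖ := ih (by omega) (A x)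
      _ ≤ K ^ j * (K * P) := by gcongr
      _ = K ^ (j + 1) * P := by ring

lemma norm_apply_pow_comp_apply_le (S : E →L[𝕜] F) (T : F →L[𝕜] E) (D : E →L[𝕜] E) (i : ℕ)
    (x : E) : ‖S ((D ^ i) (T (S x)))‖ ≤ ‖S‖ * ‖D‖ ^ i * ‖T‖ * ‖S x‖ := calc
  _ ≤ ‖S‖ * (‖D ^ i‖ * (‖T‖ * ‖S x‖)) := by
      refine S.le_opNorm_of_le ((D ^ i).le_opNorm_of_le (T.le_opNorm _))
  _ ≤ ‖S‖ * (‖D‖ ^ i * (‖T‖ * ‖S x‖)) := by gcongr; exact D.opNorm_pow_le i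
  _ = ‖S‖ * ‖D‖ ^ i * ‖T‖ * ‖S x‖ := by ring

end Perturbation

lemma sum_sq_le_of_le_pow_mul_sum {f g : ℕ → ℝ} {K : ℝ} {m : ℕ} (hK : 1 ≤ K)
    (hf : ∀ j, 0 ≤ f j) (hg : ∀ i, 0 ≤ g i)
    (hfg : ∀ j ≤ m, f j ≤ K ^ j * ∑ i ∈ range (j + 1), g i) :
    ∑ j ∈ range (m + 1), f j ^ 2 ≤ ((m + 1) * K ^ m) ^ 2 * ∑ i ∈ range (m + 1), g i ^ 2 := by
  set Q := ∑ i ∈ range (m + 1), g i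
  have hbound : ∀ j ∈ range (m + 1), f j ≤ K ^ m * Q := fun j hj => by
    have hj : j ≤ m := Nat.lt_succ_iff.mp (mem_range.mp hj)
    refine (hfg j hj).trans (mul_le_mul (pow_le_pow_right₀ hK hj) ?_ (sum_nonneg fun i _ => hg i)
      (by positivity))
    exact sum_le_sum_of_subset_of_nonneg (range_subset_range.mpr (by omega)) fun i _ _ => hg i
  have hQ : Q ^ 2 ≤ (m + 1) * ∑ i ∈ range (m + 1), g i ^ 2 := by
    simpa using sq_sum_le_card_mul_sum_sq (s := range (m + 1)) (f := g)
  calc ∑ j ∈ range (m + 1), f j ^ 2 ≤ ∑ j ∈ range (m + 1), (K ^ m * Q) ^ 2 :=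
        sum_le_sum fun j hj => pow_le_pow_left₀ (hf j) (hbound j hj) 2
    _ = (m + 1) * K ^ (2 * m) * Q ^ 2 := by
        rw [sum_const, card_range, nsmul_eq_mul]; push_cast; ring
    _ ≤ (m + 1) * K ^ (2 * m) * ((m + 1) * ∑ i ∈ range (m + 1), g i ^ 2) := by gcongr
    _ = ((m + 1) * K ^ m) ^ 2 * ∑ i ∈ range (m + 1), g i ^ 2 := by ring

section Hilbert
variable {H : Type*} [NormedAddCommGroup H] [InnerProductSpace ℂ H] [CompleteSpace H]

lemma isSelfAdjoint_half_add_adjoint (C : H →L[ℂ] H) :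
    IsSelfAdjoint ((2 : ℂ)⁻¹ • (C + ContinuousLinearMap.adjoint C)) := by
  rw [← ContinuousLinearMap.star_eq_adjoint]
  have h2 : IsSelfAdjoint (2⁻¹ : ℂ) := by
    rw [isSelfAdjoint_iff]; simp
  exact h2.smul (IsSelfAdjoint.add_star_self C)

lemma exists_eq_adjoint_comp_self {T : H →L[ℂ] H} (hT : IsSelfAdjoint T)
    (hpos : ∀ x, 0 ≤ (⟪x, T x⟫).re) : ∃ S : H →L[ℂ] H, T = ContinuousLinearMap.adjoint S ∘L S := by
  have hT0 : 0 ≤ T := by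
    refine (ContinuousLinearMap.nonneg_iff_isPositive T).mpr
      (ContinuousLinearMap.isPositive_def'.mpr ⟨hT, fun x => ?_⟩)
    rw [ContinuousLinearMap.reApplyInnerSelf_apply, inner_re_symm]
    exact hpos x
  exact CStarAlgebra.nonneg_iff_eq_star_mul_self.mp hT0

end Hilbert

theorem stmt4_general
    {H : Type*} [NormedAddCommGroup H] [InnerProductSpace ℂ H] [CompleteSpace H]
    (C CS CH : H →L[ℂ] H)
    (hCH : CH = (2 : ℂ)⁻¹ • (C + ContinuousLinearMap.adjoint C))
    (haccr : ∀ x : H, 0 ≤ (⟪x, CH x⟫).re)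
    (m : ℕ) (κ : ℝ) (hκ : 0 < κ)
    (hhypo : ∀ x : H, κ * ‖x‖ ^ 2 ≤ ∑ j ∈ Finset.range (m + 1), (⟪(CS ^ j) x, CH ((CS ^ j) x)⟫).re) :
    ∀ R : ℝ, 1 ≤ R → ∃ μ : ℝ, 0 < μ ∧ ∀ (y : H) (η : ℝ), 1 ≤ |η| → |η| ≤ R →
      μ * ‖y‖ ^ 2 ≤ ∑ j ∈ Finset.range (m + 1),
        (η ^ (2 * j))⁻¹ * (⟪(((η : ℂ) • CS + CH) ^ j) y, CH ((((η : ℂ) • CS + CH) ^ j) y)⟫).re := by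
  intro R _
  obtain ⟨S, hS⟩ := exists_eq_adjoint_comp_self (hCH ▸ isSelfAdjoint_half_add_adjoint C) haccr
  have hquad (v : H) : (⟪v, CH v⟫).re = ‖S v‖ ^ 2 := by
    rw [hS, ContinuousLinearMap.apply_norm_sq_eq_inner_adjoint_right]; rfl
  have hCH_apply (x : H) : CH x = ContinuousLinearMap.adjoint S (S x) := by rw [hS]; rfl
  set N := max 1 (‖CS‖ + ‖CH‖)
  set c := ‖S‖ * N ^ m * ‖ContinuousLinearMap.adjoint S‖
  set K : ℝ := 1 + (m + 1) * c
  have hK : 1 ≤ K := le_add_of_nonneg_right (by positivity)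
  refine ⟨κ / ((m + 1) * K ^ m) ^ 2, by positivity, fun y η hη _ => ?_⟩
  have hη0 : (η : ℂ) ≠ 0 := Complex.ofReal_ne_zero.mpr (by rintro rfl; norm_num at hη)
  set ε := (η : ℂ)⁻¹
  have hε : ‖ε‖ ≤ 1 := by simpa [ε] using inv_le_one_of_one_le₀ hη
  have hD : ‖CS + ε • CH‖ ≤ N := calc
    _ ≤ ‖CS‖ + ‖ε‖ * ‖CH‖ := (norm_add_le _ _).trans_eq (by rw [norm_smul])
    _ ≤ ‖CS‖ + ‖CH‖ := by gcongr; exact mul_le_of_le_one_left (norm_nonneg _) hε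
    _ ≤ N := le_max_right _ _
  have hc (i : ℕ) (hi : i < m) (x : H) : ‖S (((CS + ε • CH) ^ i) (CH x))‖ ≤ c * ‖S x‖ := by
    rw [hCH_apply]
    refine (norm_apply_pow_comp_apply_le _ _ _ i x).trans ?_
    simp only [c]
    gcongr
    exact (pow_le_pow_left₀ (norm_nonneg _) hD i).trans (pow_le_pow_right₀ (le_max_left _ _) hi.le)
  have hterm (j : ℕ) : (η ^ (2 * j))⁻¹ * (⟪(((η : ℂ) • CS + CH) ^ j) y,
      CH ((((η : ℂ) • CS + CH) ^ j) y)⟫).re = ‖S (((CS + ε • CH) ^ j) y)‖ ^ 2 := by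
    rw [hquad, smul_add_pow_eq_smul_pow hη0, smul_apply, map_smul, norm_smul, mul_pow, norm_pow,
      Complex.norm_real, Real.norm_eq_abs, ← pow_mul, mul_comm j 2, (even_two_mul j).pow_abs,
      inv_mul_cancel_left₀ (pow_ne_zero _ (by simpa using hη0))]
  rw [Finset.sum_congr rfl fun j _ => hterm j, div_mul_eq_mul_div, div_le_iff₀ (by positivity)]
  calc κ * ‖y‖ ^ 2 ≤ ∑ j ∈ range (m + 1), ‖S ((CS ^ j) y)‖ ^ 2 := by simpa only [hquad] using hhypo y
    _ ≤ _ := sum_sq_le_of_le_pow_mul_sum hK (fun _ => norm_nonneg _) (fun _ => norm_nonneg _)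
          (fun j hj => norm_apply_pow_le_mul_sum_of_perturbation S hε (by positivity) hc j hj y)
    _ = _ := mul_comm _ _

/-- Let `C` be accretive and hypocoercive with index `m`, `C_η = η CS + CH`. Then for
every `R ≥ 1` there is `μ > 0` such that for all `y` and all `1 ≤ |η| ≤ R`:
`∑_{j=0}^m η^{−2j} ⟨C_η^j y, CH C_η^j y⟩ ≥ μ ‖y‖²`. -/
theorem stmt4
    {H : Type*} [NormedAddCommGroup H] [InnerProductSpace ℂ H] [CompleteSpace H]
    (C CS CH : H →L[ℂ] H)
    (hCS : CS = (2 : ℂ)⁻¹ • (C - ContinuousLinearMap.adjoint C))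
    (hCH : CH = (2 : ℂ)⁻¹ • (C + ContinuousLinearMap.adjoint C))
    (haccr : ∀ x : H, 0 ≤ (⟪x, CH x⟫).re)
    (m : ℕ) (κ : ℝ) (hκ : 0 < κ)
    (hhypo : ∀ x : H, κ * ‖x‖ ^ 2 ≤ ∑ j ∈ Finset.range (m + 1), (⟪(CS ^ j) x, CH ((CS ^ j) x)⟫).re) :
    ∀ R : ℝ, 1 ≤ R → ∃ μ : ℝ, 0 < μ ∧ ∀ (y : H) (η : ℝ), 1 ≤ |η| → |η| ≤ R →
      μ * ‖y‖ ^ 2 ≤ ∑ j ∈ Finset.range (m + 1),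
        (η ^ (2 * j))⁻¹ * (⟪(((η : ℂ) • CS + CH) ^ j) y, CH ((((η : ℂ) • CS + CH) ^ j) y)⟫).re :=
  stmt4_general C CS CH hCH haccr m κ hκ hhypo
end

section
/- Let (T(t))_{t≥0} be a strongly continuous semigroup on a Banach space, let a be a positive odd integer, and suppose there are constants k₂, t₂ > 0 and a real η with |η| ≥ 1 such that ‖T(t)‖² ≤ 1 − k₂ |η|^{a−1} t^a for all 0 ≤ t ≤ t₂/|η|. Then there exist constants c₂, τ₂ > 0 depending only on k₂, t₂, a such that ‖T(t)‖² ≤ 1 − c₂ t^a for all 0 ≤ t ≤ τ₂. -/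
open Real

/-! Split `t` into `n = ⌈|η|⌉` steps of length `s = t / n ≤ t₂ / |η|`. Submultiplicativity gives
`‖T t‖² ≤ (‖T s‖²)ⁿ ≤ (1 - σ / n)ⁿ ≤ exp (-σ)` with `σ = k₂ t^a / 2^(a-1)`, because `n ≤ 2 |η|`
makes `σ / n ≤ k₂ |η|^(a-1) s^a`. For small `t` we have `σ ≤ 1`, and then `exp (-σ) ≤ 1 - σ / 2`. -/

lemma exp_neg_le_one_sub_half {σ : ℝ} (h0 : 0 ≤ σ) (h1 : σ ≤ 1) : exp (-σ) ≤ 1 - σ / 2 :=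
  calc exp (-σ) = (exp σ)⁻¹ := exp_neg σ
    _ ≤ (1 + σ)⁻¹ := inv_anti₀ (by positivity) (by linarith [add_one_le_exp σ])
    _ ≤ 1 - σ / 2 := by
      rw [inv_le_iff_one_le_mul₀' (by positivity)]
      nlinarith

lemma semigroup_natCast_mul_eq_pow {M : Type*} [Monoid M] {T : ℝ → M} (h0 : T 0 = 1)
    (hmul : ∀ s t : ℝ, 0 ≤ s → 0 ≤ t → T (s + t) = T s * T t) {s : ℝ} (hs : 0 ≤ s) (n : ℕ) :
    T (n * s) = T s ^ n := by
  induction n with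
  | zero => simp [h0]
  | succ n ih =>
    rw [Nat.cast_succ, add_one_mul, hmul _ _ (by positivity) hs, ih, pow_succ]

lemma sq_norm_semigroup_natCast_mul_le {R : Type*} [SeminormedRing R] {T : ℝ → R} (h0 : T 0 = 1)
    (hmul : ∀ s t : ℝ, 0 ≤ s → 0 ≤ t → T (s + t) = T s * T t) {s σ : ℝ} {n : ℕ} (hs : 0 ≤ s)
    (hn : 0 < n) (hσ0 : 0 ≤ σ) (hσ1 : σ ≤ 1) (hTs : ‖T s‖ ^ 2 ≤ 1 - σ / n) :
    ‖T (n * s)‖ ^ 2 ≤ 1 - σ / 2 :=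
  calc ‖T (n * s)‖ ^ 2 ≤ (‖T s‖ ^ n) ^ 2 := by
        rw [semigroup_natCast_mul_eq_pow h0 hmul hs]
        gcongr
        exact norm_pow_le' _ hn
    _ = (‖T s‖ ^ 2) ^ n := by rw [← pow_mul, ← pow_mul, mul_comm]
    _ ≤ (1 - σ / n) ^ n := by gcongr
    _ ≤ exp (-σ) := one_sub_div_pow_le_exp_neg (hσ1.trans (by exact_mod_cast hn))
    _ ≤ 1 - σ / 2 := exp_neg_le_one_sub_half hσ0 hσ1

lemma sq_norm_semigroup_le_of_rescaled {R : Type*} [SeminormedRing R] {T : ℝ → R}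
    (h0 : T 0 = 1) (hmul : ∀ s t : ℝ, 0 ≤ s → 0 ≤ t → T (s + t) = T s * T t) {m : ℕ}
    {k x t : ℝ} (hk : 0 ≤ k) (hx : 1 ≤ x) (ht : 0 ≤ t) (hkt : k * t ^ (m + 1) ≤ 2 ^ m)
    (hT : ∀ s, 0 ≤ s → s ≤ t / x → ‖T s‖ ^ 2 ≤ 1 - k * x ^ m * s ^ (m + 1)) :
    ‖T t‖ ^ 2 ≤ 1 - k / 2 ^ (m + 1) * t ^ (m + 1) := by
  set n := ⌈x⌉₊
  have hn : 0 < n := Nat.ceil_pos.2 (by linarith)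
  have hnx : (n : ℝ) ≤ 2 * x := Nat.ceil_le_two_mul (by linarith)
  set σ := k * t ^ (m + 1) / 2 ^ m
  have hσn : σ / n ≤ k * x ^ m * (t / n) ^ (m + 1) :=
    calc σ / n = k * (n / 2) ^ m * (t / n) ^ (m + 1) := by
          simp only [σ, div_pow, pow_succ]
          field_simp
      _ ≤ k * x ^ m * (t / n) ^ (m + 1) := by gcongr; linarith
  have hTs : ‖T (t / n)‖ ^ 2 ≤ 1 - σ / n := by
    have := hT (t / n) (by positivity) (div_le_div_of_nonneg_left ht (by linarith) (Nat.le_ceil x))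
    linarith
  have key := sq_norm_semigroup_natCast_mul_le h0 hmul (by positivity) hn (by positivity)
    (div_le_one_of_le₀ hkt (by positivity)) hTs
  rw [mul_div_cancel₀ _ (by positivity)] at key
  convert key using 2
  ring

theorem stmt7_general
    {X : Type*} [NormedAddCommGroup X] [NormedSpace ℂ X]
    (a : ℕ) (ha' : 0 < a) (k₂ t₂ : ℝ) (hk₂ : 0 < k₂) (ht₂ : 0 < t₂) :
    ∃ c₂ τ₂ : ℝ, 0 < c₂ ∧ 0 < τ₂ ∧
      ∀ (T : ℝ → (X →L[ℂ] X)),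
        T 0 = 1 →
        (∀ s t : ℝ, 0 ≤ s → 0 ≤ t → T (s + t) = T s ∘L T t) →
        (∀ x : X, ContinuousOn (fun t => T t x) (Set.Ici (0 : ℝ))) →
        ∀ η : ℝ, 1 ≤ |η| →
        (∀ t : ℝ, 0 ≤ t → t ≤ t₂ / |η| → ‖T t‖ ^ 2 ≤ 1 - k₂ * |η| ^ (a - 1) * t ^ a) →
        ∀ t : ℝ, 0 ≤ t → t ≤ τ₂ → ‖T t‖ ^ 2 ≤ 1 - c₂ * t ^ a := by
  obtain ⟨m, rfl⟩ : ∃ m, a = m + 1 := ⟨a - 1, by omega⟩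
  refine ⟨k₂ / 2 ^ (m + 1), min t₂ (min 1 k₂⁻¹), by positivity, by positivity, ?_⟩
  intro T h0 hmul _ η hη hyp t ht htτ
  obtain ⟨htt₂, ht1, htk⟩ : t ≤ t₂ ∧ t ≤ 1 ∧ t ≤ k₂⁻¹ := by simpa only [le_min_iff] using htτ
  have hkt : k₂ * t ^ (m + 1) ≤ 2 ^ m :=
    calc k₂ * t ^ (m + 1) ≤ k₂ * t := by gcongr; exact pow_le_of_le_one ht ht1 (by omega)
      _ ≤ k₂ * k₂⁻¹ := by gcongr
      _ = 1 := mul_inv_cancel₀ hk₂.ne'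
      _ ≤ 2 ^ m := one_le_pow₀ one_le_two
  refine sq_norm_semigroup_le_of_rescaled h0 hmul hk₂.le hη ht hkt fun s hs hst => ?_
  simpa only [Nat.add_sub_cancel] using hyp s hs (hst.trans (by gcongr))

/-- Let `(T(t))_{t≥0}` be a strongly continuous semigroup on a Banach space, `a` a
positive odd integer, and suppose there are `k₂, t₂ > 0` and a real `η` with `|η| ≥ 1`
such that `‖T(t)‖² ≤ 1 − k₂ |η|^{a−1} t^a` for `0 ≤ t ≤ t₂/|η|`. Then there are
`c₂, τ₂ > 0` (independent of `η`) with `‖T(t)‖² ≤ 1 − c₂ t^a` for `0 ≤ t ≤ τ₂`. -/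
theorem stmt7
    {X : Type*} [NormedAddCommGroup X] [NormedSpace ℂ X] [CompleteSpace X]
    (a : ℕ) (ha : Odd a) (ha' : 0 < a) (k₂ t₂ : ℝ) (hk₂ : 0 < k₂) (ht₂ : 0 < t₂) :
    ∃ c₂ τ₂ : ℝ, 0 < c₂ ∧ 0 < τ₂ ∧
      ∀ (T : ℝ → (X →L[ℂ] X)),
        T 0 = 1 →
        (∀ s t : ℝ, 0 ≤ s → 0 ≤ t → T (s + t) = T s ∘L T t) →
        (∀ x : X, ContinuousOn (fun t => T t x) (Set.Ici (0 : ℝ))) →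
        ∀ η : ℝ, 1 ≤ |η| →
        (∀ t : ℝ, 0 ≤ t → t ≤ t₂ / |η| → ‖T t‖ ^ 2 ≤ 1 - k₂ * |η| ^ (a - 1) * t ^ a) →
        ∀ t : ℝ, 0 ≤ t → t ≤ τ₂ → ‖T t‖ ^ 2 ≤ 1 - c₂ * t ^ a :=
  stmt7_general a ha' k₂ t₂ hk₂ ht₂
end

section
/- Let C ∈ B(H) be accretive and hypocoercive with index m, E ⊆ ℝ \ (−1,1) countable, C_η = η C_S + C_H, and on X = ⊕_{η∈E} H define C_E (x_η)_η = (C_η x_η)_η on its maximal domain, and P by (P x)_η = Σ_{j=0}^m η^{−2j} (C_η*)^j C_η^j x_η. Then there exists σ > 0 such that for all x in the domain of C_E: ⟨−C_E x, P x⟩ + ⟨P x, −C_E x⟩ ≤ −σ ‖x‖². -/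
open scoped ComplexInnerProductSpace ENNReal

/-- The mode operator `C_η = η CS + CH`. -/
def modeOp {H : Type*} [NormedAddCommGroup H] [InnerProductSpace ℂ H]
    (CS CH : H →L[ℂ] H) (η : ℝ) : H →L[ℂ] H :=
  (η : ℂ) • CS + CH

/-- The `η`-component of the Lyapunov operator `P`,
`(P x)_η = ∑_{j=0}^m η^{−2j} (C_η*)^j C_η^j x_η`. -/
noncomputable def lyapComp {H : Type*} [NormedAddCommGroup H] [InnerProductSpace ℂ H]
    [CompleteSpace H] (CS CH : H →L[ℂ] H) (m : ℕ) (η : ℝ) (v : H) : H :=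
  ∑ j ∈ Finset.range (m + 1),
    (((η ^ (2 * j))⁻¹ : ℝ) : ℂ)
      • (((ContinuousLinearMap.adjoint (modeOp CS CH η)) ^ j) (((modeOp CS CH η) ^ j) v))

/-!
Since `C_η = η (C_S + η⁻¹ C_H)` and the skew part `C_S` drops out of real parts, the `η`-summand
equals `-2 ∑_{j ≤ m} re ⟪B^j x_η, C_H B^j x_η⟫` with `B = C_S + η⁻¹ C_H`, a perturbation of `C_S`
by `ε C_H` with `|ε| ≤ 1`. Writing `C_H = D²` with `D = √C_H`, the defect `D (B^j - C_S^j) x` is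
bounded by the `‖D C_S^i x‖`, `i < j`, so a discrete Grönwall argument transfers the
hypocoercivity estimate of `C_S` to every such `B`, with one constant `K` independent of `η`.
Summing the resulting bound `κ / K ‖x_η‖²` over `η` gives `σ = 2 κ / K`.
-/
theorem le_one_add_pow_mul_of_le_add_mul_sum {a : ℕ → ℝ} {c T : ℝ} {m : ℕ} (hc : 0 ≤ c)
    (h : ∀ j ≤ m, a j ≤ T + c * ∑ i ∈ Finset.range j, a i) :
    ∀ j ≤ m, a j ≤ (1 + c) ^ j * T := by
  have key : ∀ j ≤ m, T + c * ∑ i ∈ Finset.range j, a i ≤ (1 + c) ^ j * T := by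
    intro j
    induction j with
    | zero => simp
    | succ j ih =>
      intro hj
      have hprev := ih (by omega)
      have haj := h j (by omega)
      calc T + c * ∑ i ∈ Finset.range (j + 1), a i
          = (T + c * ∑ i ∈ Finset.range j, a i) + c * a j := by
            rw [Finset.sum_range_succ]; ring
        _ ≤ (1 + c) * (T + c * ∑ i ∈ Finset.range j, a i) := by nlinarith
        _ ≤ (1 + c) * ((1 + c) ^ j * T) := by gcongr
        _ = (1 + c) ^ (j + 1) * T := by ring
  exact fun j hj => (h j hj).trans (key j hj)

section PowerPerturbation

variable {𝕜 E F : Type*} [NontriviallyNormedField 𝕜] [NormedAddCommGroup E] [NormedSpace 𝕜 E]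
  [NormedAddCommGroup F] [NormedSpace 𝕜 F]

theorem ContinuousLinearMap.norm_pow_apply_le (B : E →L[𝕜] E) {N : ℝ} (hB : ‖B‖ ≤ N)
    (j : ℕ) (u : E) : ‖(B ^ j) u‖ ≤ N ^ j * ‖u‖ := by
  induction j with
  | zero => simp
  | succ j ih =>
    calc ‖(B ^ (j + 1)) u‖ = ‖B ((B ^ j) u)‖ := by rw [pow_succ']; rfl
      _ ≤ ‖B‖ * ‖(B ^ j) u‖ := B.le_opNorm _
      _ ≤ N * (N ^ j * ‖u‖) := by gcongr; exact (norm_nonneg B).trans hB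
      _ = N ^ (j + 1) * ‖u‖ := by ring

theorem ContinuousLinearMap.norm_pow_apply_sub_pow_apply_le (A B : E →L[𝕜] E) {N : ℝ}
    (hN : 1 ≤ N) (hB : ‖B‖ ≤ N) (j : ℕ) (v : E) :
    ‖(B ^ j) v - (A ^ j) v‖ ≤ N ^ j * ∑ i ∈ Finset.range j, ‖(B - A) ((A ^ i) v)‖ := by
  induction j with
  | zero => simp
  | succ j ih =>
    have hsplit : (B ^ (j + 1)) v - (A ^ (j + 1)) v
        = B ((B ^ j) v - (A ^ j) v) + (B - A) ((A ^ j) v) := by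
      simp only [pow_succ', sub_apply, map_sub]
      abel
    have hNj : 1 ≤ N ^ (j + 1) := one_le_pow₀ hN
    calc ‖(B ^ (j + 1)) v - (A ^ (j + 1)) v‖
        ≤ ‖B‖ * ‖(B ^ j) v - (A ^ j) v‖ + ‖(B - A) ((A ^ j) v)‖ := by
          rw [hsplit]; exact (norm_add_le _ _).trans (by gcongr; exact B.le_opNorm _)
      _ ≤ N * (N ^ j * ∑ i ∈ Finset.range j, ‖(B - A) ((A ^ i) v)‖)
            + N ^ (j + 1) * ‖(B - A) ((A ^ j) v)‖ := by
          gcongr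
          exact le_mul_of_one_le_left (norm_nonneg _) hNj
      _ = N ^ (j + 1) * ∑ i ∈ Finset.range (j + 1), ‖(B - A) ((A ^ i) v)‖ := by
          rw [Finset.sum_range_succ]; ring

theorem ContinuousLinearMap.norm_apply_pow_le_of_norm_sub_apply_le (A B : E →L[𝕜] E)
    (D : E →L[𝕜] F) {N c : ℝ} (hN : 1 ≤ N) (hB : ‖B‖ ≤ N) (hc : 0 ≤ c)
    (hBA : ∀ u, ‖(B - A) u‖ ≤ c * ‖D u‖) (m : ℕ) (v : E) :
    ∀ j ≤ m, ‖D ((A ^ j) v)‖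
      ≤ (1 + ‖D‖ * N ^ m * c) ^ j * ∑ k ∈ Finset.range (m + 1), ‖D ((B ^ k) v)‖ := by
  refine le_one_add_pow_mul_of_le_add_mul_sum (by positivity) fun j hj => ?_
  have hBj : ‖D ((B ^ j) v)‖ ≤ ∑ k ∈ Finset.range (m + 1), ‖D ((B ^ k) v)‖ :=
    Finset.single_le_sum (f := fun k => ‖D ((B ^ k) v)‖) (fun k _ => norm_nonneg _)
      (Finset.mem_range.mpr (by omega))
  have hdiff : ‖(B ^ j) v - (A ^ j) v‖ ≤ N ^ m * ∑ i ∈ Finset.range j, c * ‖D ((A ^ i) v)‖ :=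
    calc ‖(B ^ j) v - (A ^ j) v‖ ≤ N ^ j * ∑ i ∈ Finset.range j, ‖(B - A) ((A ^ i) v)‖ :=
          norm_pow_apply_sub_pow_apply_le A B hN hB j v
      _ ≤ N ^ m * ∑ i ∈ Finset.range j, c * ‖D ((A ^ i) v)‖ := by
          gcongr with i
          exact hBA _
  calc ‖D ((A ^ j) v)‖ ≤ ‖D ((B ^ j) v)‖ + ‖D ((A ^ j) v - (B ^ j) v)‖ := by
        rw [map_sub]; exact norm_le_norm_add_norm_sub' _ _
    _ ≤ ∑ k ∈ Finset.range (m + 1), ‖D ((B ^ k) v)‖ + ‖D‖ * ‖(B ^ j) v - (A ^ j) v‖ := by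
        rw [← norm_neg (_ - _), neg_sub]; gcongr; exact D.le_opNorm _
    _ ≤ ∑ k ∈ Finset.range (m + 1), ‖D ((B ^ k) v)‖
          + ‖D‖ * N ^ m * c * ∑ i ∈ Finset.range j, ‖D ((A ^ i) v)‖ := by
        rw [← Finset.mul_sum] at hdiff
        nlinarith [norm_nonneg D]

theorem ContinuousLinearMap.sum_sq_norm_apply_pow_le_of_norm_sub_apply_le (A B : E →L[𝕜] E)
    (D : E →L[𝕜] F) {N c : ℝ} (hN : 1 ≤ N) (hB : ‖B‖ ≤ N) (hc : 0 ≤ c)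
    (hBA : ∀ u, ‖(B - A) u‖ ≤ c * ‖D u‖) (m : ℕ) (v : E) :
    ∑ j ∈ Finset.range (m + 1), ‖D ((A ^ j) v)‖ ^ 2
      ≤ ((m : ℝ) + 1) ^ 2 * (1 + ‖D‖ * N ^ m * c) ^ (2 * m)
        * ∑ j ∈ Finset.range (m + 1), ‖D ((B ^ j) v)‖ ^ 2 := by
  set L := (1 + ‖D‖ * N ^ m * c) ^ m
  set T := ∑ k ∈ Finset.range (m + 1), ‖D ((B ^ k) v)‖
  have h1 : 1 ≤ 1 + ‖D‖ * N ^ m * c := le_add_of_nonneg_right (by positivity)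
  have hA : ∀ j ∈ Finset.range (m + 1), ‖D ((A ^ j) v)‖ ^ 2 ≤ (L * T) ^ 2 := by
    intro j hj
    have hjm : j ≤ m := Nat.lt_succ_iff.mp (Finset.mem_range.mp hj)
    gcongr
    refine (norm_apply_pow_le_of_norm_sub_apply_le A B D hN hB hc hBA m v j hjm).trans ?_
    gcongr
    exact pow_le_pow_right₀ h1 hjm
  have hT : T ^ 2 ≤ ((m : ℝ) + 1) * ∑ j ∈ Finset.range (m + 1), ‖D ((B ^ j) v)‖ ^ 2 := by
    have := sq_sum_le_card_mul_sum_sq (s := Finset.range (m + 1)) (f := fun k => ‖D ((B ^ k) v)‖)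
    rwa [Finset.card_range, Nat.cast_succ] at this
  calc ∑ j ∈ Finset.range (m + 1), ‖D ((A ^ j) v)‖ ^ 2 ≤ ((m : ℝ) + 1) * (L * T) ^ 2 := by
        simpa using Finset.sum_le_sum hA
    _ = ((m : ℝ) + 1) * L ^ 2 * T ^ 2 := by ring
    _ ≤ ((m : ℝ) + 1) * L ^ 2
          * (((m : ℝ) + 1) * ∑ j ∈ Finset.range (m + 1), ‖D ((B ^ j) v)‖ ^ 2) := by
        gcongr
    _ = _ := by rw [pow_mul']; ring

theorem ContinuousLinearMap.sum_sq_norm_apply_pow_le (B : E →L[𝕜] E) (D : E →L[𝕜] F) {N : ℝ}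
    (hN : 1 ≤ N) (hB : ‖B‖ ≤ N) (m : ℕ) (v : E) :
    ∑ j ∈ Finset.range (m + 1), ‖D ((B ^ j) v)‖ ^ 2
      ≤ ((m : ℝ) + 1) * (‖D‖ * N ^ m) ^ 2 * ‖v‖ ^ 2 := by
  have hj : ∀ j ∈ Finset.range (m + 1), ‖D ((B ^ j) v)‖ ^ 2 ≤ (‖D‖ * N ^ m * ‖v‖) ^ 2 := by
    intro j hj
    have hjm : j ≤ m := Nat.lt_succ_iff.mp (Finset.mem_range.mp hj)
    gcongr
    calc ‖D ((B ^ j) v)‖ ≤ ‖D‖ * (N ^ j * ‖v‖) :=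
          (D.le_opNorm _).trans (by gcongr; exact norm_pow_apply_le B hB j v)
      _ ≤ ‖D‖ * N ^ m * ‖v‖ := by rw [← mul_assoc]; gcongr
  calc _ ≤ ((m : ℝ) + 1) * (‖D‖ * N ^ m * ‖v‖) ^ 2 := by simpa using Finset.sum_le_sum hj
    _ = _ := by ring

end PowerPerturbation

section Hilbert

variable {H : Type*} [NormedAddCommGroup H] [InnerProductSpace ℂ H] [CompleteSpace H]

open ContinuousLinearMap

theorem re_inner_half_sub_adjoint_apply_self (C : H →L[ℂ] H) (w : H) :
    (⟪w, ((2 : ℂ)⁻¹ • (C - adjoint C)) w⟫).re = 0 := by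
  rw [smul_apply, sub_apply, inner_smul_right, inner_sub_right, adjoint_inner_right,
    ← inner_conj_symm (C w) w, Complex.sub_conj]
  simp

theorem isPositive_half_add_adjoint (C : H →L[ℂ] H)
    (h : ∀ x, 0 ≤ (⟪x, ((2 : ℂ)⁻¹ • (C + adjoint C)) x⟫).re) :
    ((2 : ℂ)⁻¹ • (C + adjoint C)).IsPositive := by
  have hsa : IsSelfAdjoint ((2 : ℂ)⁻¹ • (C + adjoint C)) := by
    rw [IsSelfAdjoint, ← star_eq_adjoint, star_smul, star_add, star_star, add_comm]
    simp
  refine isPositive_def'.mpr ⟨hsa, fun x => ?_⟩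
  rw [reApplyInnerSelf_apply, inner_re_symm]
  exact h x

theorem ContinuousLinearMap.IsPositive.exists_re_inner_apply_eq_norm_sq {T : H →L[ℂ] H}
    (hT : T.IsPositive) :
    ∃ D : H →L[ℂ] H, (∀ u, (⟪u, T u⟫).re = ‖D u‖ ^ 2) ∧ ∀ u, ‖T u‖ ≤ ‖D‖ * ‖D u‖ := by
  have hT0 : 0 ≤ T := (nonneg_iff_isPositive T).mpr hT
  have hDD : ∀ u, CFC.sqrt T (CFC.sqrt T u) = T u := fun u => by
    conv_rhs => rw [← CFC.sqrt_mul_sqrt_self T hT0]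
    rfl
  have hDsa : IsSelfAdjoint (CFC.sqrt T) := IsSelfAdjoint.of_nonneg (CFC.sqrt_nonneg T)
  refine ⟨CFC.sqrt T, fun u => ?_, fun u => ?_⟩
  · rw [← hDD, ← adjoint_inner_left, hDsa.adjoint_eq, inner_self_eq_norm_sq_to_K]
    norm_cast
  · rw [← hDD]; exact le_opNorm _ _

theorem re_inner_neg_apply_smul_adjoint_pow_apply_pow (A : H →L[ℂ] H) (r : ℝ) (j : ℕ) (v : H) :
    (⟪-(A v), (r : ℂ) • ((adjoint A ^ j) ((A ^ j) v))⟫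
      + ⟪(r : ℂ) • ((adjoint A ^ j) ((A ^ j) v)), -(A v)⟫).re
      = -2 * r * (⟪(A ^ j) v, A ((A ^ j) v)⟫).re := by
  have hcomm : (A ^ j) (A v) = A ((A ^ j) v) := by
    change (A ^ j * A) v = (A * A ^ j) v
    rw [pow_mul_comm']
  have hadj : adjoint A ^ j = adjoint (A ^ j) := by
    rw [← star_eq_adjoint, ← star_eq_adjoint, star_pow]
  rw [hadj, inner_neg_left, inner_neg_right, inner_smul_right, inner_smul_left,
    adjoint_inner_right, adjoint_inner_left, hcomm, Complex.conj_ofReal]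
  simp only [Complex.add_re, Complex.neg_re, Complex.re_ofReal_mul]
  rw [← inner_conj_symm (A ((A ^ j) v)), Complex.conj_re]
  ring

end Hilbert

section Hypocoercivity

variable {H : Type*} [NormedAddCommGroup H] [InnerProductSpace ℂ H]

open ContinuousLinearMap

noncomputable def hypocoercivityForm (A CH : H →L[ℂ] H) (m : ℕ) (v : H) : ℝ :=
  ∑ j ∈ Finset.range (m + 1), (⟪(A ^ j) v, CH ((A ^ j) v)⟫).re

variable {CS CH D : H →L[ℂ] H} {m : ℕ}

theorem norm_add_smul_le_of_abs_le_one {ε : ℝ} (hε : |ε| ≤ 1) :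
    ‖CS + (ε : ℂ) • CH‖ ≤ 1 + ‖CS‖ + ‖CH‖ :=
  calc ‖CS + (ε : ℂ) • CH‖ ≤ ‖CS‖ + |ε| * ‖CH‖ := by
        refine (norm_add_le _ _).trans ?_
        rw [norm_smul, Complex.norm_real, Real.norm_eq_abs]
    _ ≤ 1 + ‖CS‖ + ‖CH‖ := by nlinarith [norm_nonneg CH]

theorem hypocoercivityForm_eq_sum_sq (hD : ∀ u, (⟪u, CH u⟫).re = ‖D u‖ ^ 2) (A : H →L[ℂ] H)
    (v : H) : hypocoercivityForm A CH m v = ∑ j ∈ Finset.range (m + 1), ‖D ((A ^ j) v)‖ ^ 2 := by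
  simp only [hypocoercivityForm, hD]

theorem hypocoercivityForm_add_smul_lower (hD : ∀ u, (⟪u, CH u⟫).re = ‖D u‖ ^ 2)
    (hCHD : ∀ u, ‖CH u‖ ≤ ‖D‖ * ‖D u‖) {κ : ℝ}
    (hhypo : ∀ v, κ * ‖v‖ ^ 2 ≤ hypocoercivityForm CS CH m v) {ε : ℝ} (hε : |ε| ≤ 1) (v : H) :
    κ * ‖v‖ ^ 2 ≤ ((m : ℝ) + 1) ^ 2 * (1 + ‖D‖ * (1 + ‖CS‖ + ‖CH‖) ^ m * ‖D‖) ^ (2 * m)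
      * hypocoercivityForm (CS + (ε : ℂ) • CH) CH m v := by
  have hperturb : ∀ u, ‖(CS + (ε : ℂ) • CH - CS) u‖ ≤ ‖D‖ * ‖D u‖ := fun u =>
    calc ‖(CS + (ε : ℂ) • CH - CS) u‖ = |ε| * ‖CH u‖ := by
          rw [add_sub_cancel_left, smul_apply, norm_smul, Complex.norm_real,
            Real.norm_eq_abs]
      _ ≤ ‖D‖ * ‖D u‖ := by nlinarith [hCHD u, norm_nonneg (CH u)]
  rw [hypocoercivityForm_eq_sum_sq hD]
  refine (hhypo v).trans ?_
  rw [hypocoercivityForm_eq_sum_sq hD]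
  exact sum_sq_norm_apply_pow_le_of_norm_sub_apply_le CS _ D
    (by linarith [norm_nonneg CS, norm_nonneg CH]) (norm_add_smul_le_of_abs_le_one hε)
    (norm_nonneg D) hperturb m v

theorem hypocoercivityForm_add_smul_le (hD : ∀ u, (⟪u, CH u⟫).re = ‖D u‖ ^ 2) {ε : ℝ}
    (hε : |ε| ≤ 1) (v : H) :
    hypocoercivityForm (CS + (ε : ℂ) • CH) CH m v
      ≤ ((m : ℝ) + 1) * (‖D‖ * (1 + ‖CS‖ + ‖CH‖) ^ m) ^ 2 * ‖v‖ ^ 2 := by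
  rw [hypocoercivityForm_eq_sum_sq hD]
  exact sum_sq_norm_apply_pow_le _ D
    (by linarith [norm_nonneg CS, norm_nonneg CH]) (norm_add_smul_le_of_abs_le_one hε) m v

end Hypocoercivity

section Modes

variable {H : Type*} [NormedAddCommGroup H] [InnerProductSpace ℂ H]

open ContinuousLinearMap

noncomputable def modeDissipation (CS CH : H →L[ℂ] H) (m : ℕ) (η : ℝ) (v : H) : ℝ :=
  ∑ j ∈ Finset.range (m + 1),
    (η ^ (2 * j))⁻¹ * (⟪(modeOp CS CH η ^ j) v, CH ((modeOp CS CH η ^ j) v)⟫).re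

variable {CS CH : H →L[ℂ] H}

theorem re_inner_modeOp_apply_self (hS : ∀ w, (⟪w, CS w⟫).re = 0) (η : ℝ) (w : H) :
    (⟪w, modeOp CS CH η w⟫).re = (⟪w, CH w⟫).re := by
  simp [modeOp, hS]

theorem re_inner_neg_modeOp_lyapComp [CompleteSpace H] (hS : ∀ w, (⟪w, CS w⟫).re = 0) (m : ℕ)
    (η : ℝ) (v : H) :
    (⟪-(modeOp CS CH η v), lyapComp CS CH m η v⟫
      + ⟪lyapComp CS CH m η v, -(modeOp CS CH η v)⟫).re = -2 * modeDissipation CS CH m η v := by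
  rw [lyapComp, inner_sum, sum_inner, ← Finset.sum_add_distrib, Complex.re_sum, modeDissipation,
    Finset.mul_sum]
  refine Finset.sum_congr rfl fun j _ => ?_
  rw [re_inner_neg_apply_smul_adjoint_pow_apply_pow, re_inner_modeOp_apply_self hS]
  ring

theorem modeDissipation_eq_hypocoercivityForm {η : ℝ} (hη : η ≠ 0) (m : ℕ) (v : H) :
    modeDissipation CS CH m η v = hypocoercivityForm (CS + ((η⁻¹ : ℝ) : ℂ) • CH) CH m v := by
  have hmode : modeOp CS CH η = (η : ℂ) • (CS + ((η⁻¹ : ℝ) : ℂ) • CH) := by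
    rw [modeOp, smul_add, smul_smul, Complex.ofReal_inv, mul_inv_cancel₀ (by exact_mod_cast hη),
      one_smul]
  refine Finset.sum_congr rfl fun j _ => ?_
  rw [hmode, smul_pow, smul_apply, map_smul, inner_smul_left,
    inner_smul_right, ← mul_assoc, ← Complex.ofReal_pow, Complex.conj_ofReal, ← Complex.ofReal_mul,
    Complex.re_ofReal_mul, ← mul_assoc, ← pow_add, ← two_mul,
    inv_mul_cancel₀ (pow_ne_zero _ hη), one_mul]

end Modes

theorem lp.mul_norm_sq_le_tsum {ι E : Type*} [NormedAddCommGroup E]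
    (x : lp (fun _ : ι => E) 2) {g : ι → ℝ} {a b : ℝ} (hlow : ∀ i, a * ‖x i‖ ^ 2 ≤ g i)
    (hup : ∀ i, g i ≤ b * ‖x i‖ ^ 2) : a * ‖x‖ ^ 2 ≤ ∑' i, g i := by
  have h2 : (0 : ℝ) < (2 : ℝ≥0∞).toReal := by norm_num
  have hsum : Summable fun i => ‖x i‖ ^ 2 := by simpa using (lp.memℓp x).summable h2
  have hnorm : ‖x‖ ^ 2 = ∑' i, ‖x i‖ ^ 2 := by simpa using lp.norm_rpow_eq_tsum h2 x
  have hg : Summable g := by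
    refine Summable.of_norm_bounded (hsum.mul_left (|a| + |b|)) fun i => ?_
    rw [Real.norm_eq_abs, abs_le]
    constructor <;> nlinarith [hlow i, hup i, neg_abs_le a, le_abs_self b, sq_nonneg ‖x i‖,
      abs_nonneg a, abs_nonneg b]
  rw [hnorm, ← tsum_mul_left]
  exact Summable.tsum_le_tsum hlow (hsum.mul_left a) hg

theorem stmt10_general
    {H : Type*} [NormedAddCommGroup H] [InnerProductSpace ℂ H] [CompleteSpace H]
    (C CS CH : H →L[ℂ] H)
    (hCS : CS = (2 : ℂ)⁻¹ • (C - ContinuousLinearMap.adjoint C))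
    (hCH : CH = (2 : ℂ)⁻¹ • (C + ContinuousLinearMap.adjoint C))
    (haccr : ∀ x : H, 0 ≤ (⟪x, CH x⟫).re)
    (m : ℕ) (κ : ℝ) (hκ : 0 < κ)
    (hhypo : ∀ x : H, κ * ‖x‖ ^ 2 ≤ ∑ j ∈ Finset.range (m + 1), (⟪(CS ^ j) x, CH ((CS ^ j) x)⟫).re)
    (E : Set ℝ) (hE1 : ∀ η ∈ E, 1 ≤ |η|) :
    ∃ σ : ℝ, 0 < σ ∧
      ∀ x : lp (fun _ : E => H) 2,
        Summable (fun η : E => ‖modeOp CS CH (η : ℝ) ((x : ∀ _ : E, H) η)‖ ^ 2) →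
        (∑' η : E,
            (⟪-(modeOp CS CH (η : ℝ) ((x : ∀ _ : E, H) η)),
                lyapComp CS CH m (η : ℝ) ((x : ∀ _ : E, H) η)⟫
              + ⟪lyapComp CS CH m (η : ℝ) ((x : ∀ _ : E, H) η),
                -(modeOp CS CH (η : ℝ) ((x : ∀ _ : E, H) η))⟫).re)
          ≤ -σ * ‖x‖ ^ 2 := by
  have hS : ∀ w, (⟪w, CS w⟫).re = 0 := by subst hCS; exact re_inner_half_sub_adjoint_apply_self C
  have hpos : CH.IsPositive := by subst hCH; exact isPositive_half_add_adjoint C haccr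
  obtain ⟨D, hD, hCHD⟩ := hpos.exists_re_inner_apply_eq_norm_sq
  set K := ((m : ℝ) + 1) ^ 2 * (1 + ‖D‖ * (1 + ‖CS‖ + ‖CH‖) ^ m * ‖D‖) ^ (2 * m)
  have hK : 0 < K := by positivity
  have hη : ∀ η : E, (η : ℝ) ≠ 0 ∧ |(η : ℝ)⁻¹| ≤ 1 := fun η =>
    ⟨abs_pos.mp (one_pos.trans_le (hE1 η η.2)),
      by rw [abs_inv]; exact inv_le_one_of_one_le₀ (hE1 η η.2)⟩
  refine ⟨2 * (κ / K), by positivity, fun x _ => ?_⟩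
  have hbound := lp.mul_norm_sq_le_tsum x
    (g := fun η => modeDissipation CS CH m (η : ℝ) ((x : ∀ _ : E, H) η))
    (fun η => by
      rw [modeDissipation_eq_hypocoercivityForm (hη η).1, div_mul_eq_mul_div, div_le_iff₀' hK]
      exact hypocoercivityForm_add_smul_lower hD hCHD hhypo (hη η).2 _)
    (fun η => by
      rw [modeDissipation_eq_hypocoercivityForm (hη η).1]
      exact hypocoercivityForm_add_smul_le hD (hη η).2 _)
  simp_rw [re_inner_neg_modeOp_lyapComp hS, tsum_mul_left]
  linarith

/-- Let `C` be accretive and hypocoercive with index `m` (parts `CS`, `CH`), `E ⊆ ℝ \ (−1,1)`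
countable, `C_η = η CS + CH`, `C_E` the diagonal operator on `X = ⊕_{η∈E} H` with maximal
domain, and `(P x)_η = ∑_{j=0}^m η^{−2j} (C_η*)^j C_η^j x_η`. Then there is `σ > 0` with
`⟨−C_E x, P x⟩ + ⟨P x, −C_E x⟩ ≤ −σ ‖x‖²` for all `x` in the domain of `C_E`. -/
theorem stmt10
    {H : Type*} [NormedAddCommGroup H] [InnerProductSpace ℂ H] [CompleteSpace H]
    (C CS CH : H →L[ℂ] H)
    (hCS : CS = (2 : ℂ)⁻¹ • (C - ContinuousLinearMap.adjoint C))
    (hCH : CH = (2 : ℂ)⁻¹ • (C + ContinuousLinearMap.adjoint C))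
    (haccr : ∀ x : H, 0 ≤ (⟪x, CH x⟫).re)
    (m : ℕ) (κ : ℝ) (hκ : 0 < κ)
    (hhypo : ∀ x : H, κ * ‖x‖ ^ 2 ≤ ∑ j ∈ Finset.range (m + 1), (⟪(CS ^ j) x, CH ((CS ^ j) x)⟫).re)
    (E : Set ℝ) (hE : E.Countable) (hE1 : ∀ η ∈ E, 1 ≤ |η|) :
    ∃ σ : ℝ, 0 < σ ∧
      ∀ x : lp (fun _ : E => H) 2,
        Summable (fun η : E => ‖modeOp CS CH (η : ℝ) ((x : ∀ _ : E, H) η)‖ ^ 2) →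
        (∑' η : E,
            (⟪-(modeOp CS CH (η : ℝ) ((x : ∀ _ : E, H) η)),
                lyapComp CS CH m (η : ℝ) ((x : ∀ _ : E, H) η)⟫
              + ⟪lyapComp CS CH m (η : ℝ) ((x : ∀ _ : E, H) η),
                -(modeOp CS CH (η : ℝ) ((x : ∀ _ : E, H) η))⟫).re)
          ≤ -σ * ‖x‖ ^ 2 :=
  stmt10_general C CS CH hCS hCH haccr m κ hκ hhypo E hE1
end

section
/- Let A = −C with C ∈ B(H) accretive on a Hilbert space H. If there exist a bounded self-adjoint operator P with P ≥ Id and σ > 0 such that ⟨A x, P x⟩ + ⟨P x, A x⟩ ≤ −σ‖x‖² for all x ∈ H, then the semigroup (e^{At})_{t≥0} is exponentially stable: there are M ≥ 1, ω > 0 with ‖e^{At}‖ ≤ M e^{−ωt} for all t ≥ 0. -/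
open scoped ComplexInnerProductSpace

/-!
Along an orbit `u t = e^{tA} x` the Lyapunov functional `f t = Re ⟪u t, P (u t)⟫` satisfies
`f' ≤ -σ ‖u‖² ≤ -(σ / N) f` with `N ≥ ‖P‖`, so Grönwall gives `f t ≤ e^{-σ t / N} f 0`.
Since `‖u‖² ≤ f ≤ N ‖u‖²`, this yields `‖e^{tA}‖ ≤ √N e^{-σ t / (2N)}`.
-/

theorem le_mul_exp_of_hasDerivAt_le_mul {f f' : ℝ → ℝ} {K : ℝ}
    (hf : ∀ s, HasDerivAt f (f' s) s) (hbound : ∀ s, f' s ≤ K * f s) {t : ℝ} (ht : 0 ≤ t) :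
    f t ≤ f 0 * Real.exp (K * t) := by
  have := le_gronwallBound_of_liminf_deriv_right_le (a := 0) (b := t) (ε := 0)
    (fun s _ => (hf s).continuousAt.continuousWithinAt)
    (fun s _ _ hr => (hf s).hasDerivWithinAt.liminf_right_slope_le hr) le_rfl
    (fun s _ => by simpa using hbound s) t ⟨ht, le_rfl⟩
  simpa [gronwallBound_ε0] using this

section Hilbert

variable {H : Type*} [NormedAddCommGroup H] [InnerProductSpace ℂ H]

theorem ContinuousLinearMap.re_inner_self_apply_le (P : H →L[ℂ] H) (x : H) :
    (⟪x, P x⟫).re ≤ ‖P‖ * ‖x‖ ^ 2 :=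
  calc (⟪x, P x⟫).re ≤ ‖x‖ * ‖P x‖ := (Complex.re_le_norm _).trans (norm_inner_le_norm _ _)
    _ ≤ ‖x‖ * (‖P‖ * ‖x‖) := by gcongr; exact P.le_opNorm x
    _ = ‖P‖ * ‖x‖ ^ 2 := by ring

variable [CompleteSpace H]

theorem HasDerivAt.re_inner_self_apply {P : H →L[ℂ] H} (hP : IsSelfAdjoint P) {u : ℝ → H}
    {u' : H} {s : ℝ} (hu : HasDerivAt u u' s) :
    HasDerivAt (fun s => (⟪u s, P (u s)⟫).re) (⟪u', P (u s)⟫ + ⟪P (u s), u'⟫).re s := by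
  have hPu : HasDerivAt (fun s => P (u s)) (P u') s :=
    (P.restrictScalars ℝ).hasFDerivAt.comp_hasDerivAt s hu
  have h := Complex.reCLM.hasFDerivAt.comp_hasDerivAt s (hu.inner ℂ hPu)
  rw [← hP.adjoint_eq, ContinuousLinearMap.adjoint_inner_right, hP.adjoint_eq, add_comm] at h
  simpa [Function.comp_def] using h

theorem hasDerivAt_exp_smul_apply (A : H →L[ℂ] H) (x : H) (s : ℝ) :
    HasDerivAt (fun s : ℝ => NormedSpace.exp (s • A) x) (A (NormedSpace.exp (s • A) x)) s := by
  simpa [Function.comp_def] using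
    ((ContinuousLinearMap.apply ℂ H x).restrictScalars ℝ).hasFDerivAt.comp_hasDerivAt s
      (hasDerivAt_exp_smul_const' (𝕂 := ℝ) A s)

theorem re_inner_exp_smul_apply_le_of_lyapunov {A P : H →L[ℂ] H} (hP : IsSelfAdjoint P)
    {σ N : ℝ} (hσ : 0 ≤ σ) (hN : 0 < N) (hPN : ‖P‖ ≤ N)
    (hLyap : ∀ x : H, (⟪A x, P x⟫ + ⟪P x, A x⟫).re ≤ -σ * ‖x‖ ^ 2) (x : H) {t : ℝ}
    (ht : 0 ≤ t) :
    (⟪NormedSpace.exp (t • A) x, P (NormedSpace.exp (t • A) x)⟫).re ≤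
      (⟪x, P x⟫).re * Real.exp (-(σ / N) * t) := by
  set u : ℝ → H := fun s => NormedSpace.exp (s • A) x
  have hderiv (s : ℝ) := (hasDerivAt_exp_smul_apply A x s).re_inner_self_apply hP
  have hbound (s : ℝ) :
      (⟪A (u s), P (u s)⟫ + ⟪P (u s), A (u s)⟫).re ≤ -(σ / N) * (⟪u s, P (u s)⟫).re :=
    calc _ ≤ -σ * ‖u s‖ ^ 2 := hLyap (u s)
      _ = -(σ / N) * (N * ‖u s‖ ^ 2) := by field_simp
      _ ≤ -(σ / N) * (⟪u s, P (u s)⟫).re := by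
        have hq : (⟪u s, P (u s)⟫).re ≤ N * ‖u s‖ ^ 2 :=
          (P.re_inner_self_apply_le (u s)).trans (by gcongr)
        exact mul_le_mul_of_nonpos_left hq (neg_nonpos.mpr (by positivity))
  simpa [u] using le_mul_exp_of_hasDerivAt_le_mul hderiv hbound ht

end Hilbert

theorem stmt11_general
    {H : Type*} [NormedAddCommGroup H] [InnerProductSpace ℂ H] [CompleteSpace H]
    (C : H →L[ℂ] H)
    (P : H →L[ℂ] H) (hP : IsSelfAdjoint P)
    (hPge : ∀ x : H, ‖x‖ ^ 2 ≤ (⟪x, P x⟫).re)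
    (σ : ℝ) (hσ : 0 < σ)
    (hLyap : ∀ x : H, (⟪(-C) x, P x⟫ + ⟪P x, (-C) x⟫).re ≤ -σ * ‖x‖ ^ 2) :
    ∃ M ω : ℝ, 1 ≤ M ∧ 0 < ω ∧
      ∀ t : ℝ, 0 ≤ t → ‖NormedSpace.exp (t • (-C))‖ ≤ M * Real.exp (-ω * t) := by
  set N := max 1 ‖P‖
  have hN : 0 < N := zero_lt_one.trans_le (le_max_left _ _)
  refine ⟨√N, σ / N / 2, Real.one_le_sqrt.mpr (le_max_left _ _), by positivity, fun t ht => ?_⟩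
  refine ContinuousLinearMap.opNorm_le_bound _ (by positivity) fun x => ?_
  have hsq : ‖NormedSpace.exp (t • -C) x‖ ^ 2 ≤ (√N * Real.exp (-(σ / N / 2) * t) * ‖x‖) ^ 2 :=
    calc _ ≤ _ := hPge _
      _ ≤ (⟪x, P x⟫).re * Real.exp (-(σ / N) * t) :=
        re_inner_exp_smul_apply_le_of_lyapunov hP hσ.le hN (le_max_right _ _) hLyap x ht
      _ ≤ N * ‖x‖ ^ 2 * Real.exp (-(σ / N) * t) := by
        gcongr; exact (P.re_inner_self_apply_le x).trans (by gcongr; exact le_max_right _ _)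
      _ = _ := by
        rw [mul_pow, mul_pow, Real.sq_sqrt hN.le, ← Real.exp_nat_mul]; ring_nf
  exact (pow_le_pow_iff_left₀ (norm_nonneg _) (by positivity) two_ne_zero).mp hsq

/-- If `A = −C` with `C` bounded accretive, and there are a bounded self-adjoint `P ≥ Id`
and `σ > 0` with `⟨Ax, Px⟩ + ⟨Px, Ax⟩ ≤ −σ‖x‖²` for all `x`, then `(e^{At})_{t≥0}` is
exponentially stable: `‖e^{At}‖ ≤ M e^{−ωt}` for some `M ≥ 1`, `ω > 0`. -/
theorem stmt11
    {H : Type*} [NormedAddCommGroup H] [InnerProductSpace ℂ H] [CompleteSpace H]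
    (C : H →L[ℂ] H)
    (haccr : ∀ x : H, 0 ≤ (⟪x, C x⟫).re)
    (P : H →L[ℂ] H) (hP : IsSelfAdjoint P)
    (hPge : ∀ x : H, ‖x‖ ^ 2 ≤ (⟪x, P x⟫).re)
    (σ : ℝ) (hσ : 0 < σ)
    (hLyap : ∀ x : H, (⟪(-C) x, P x⟫ + ⟪P x, (-C) x⟫).re ≤ -σ * ‖x‖ ^ 2) :
    ∃ M ω : ℝ, 1 ≤ M ∧ 0 < ω ∧
      ∀ t : ℝ, 0 ≤ t → ‖NormedSpace.exp (t • (-C))‖ ≤ M * Real.exp (-ω * t) :=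
  stmt11_general C P hP hPge σ hσ hLyap
end

section
/- If C ∈ B(H) is hypocoercive with index m (Σ_{j=0}^m (C*)^j C_H C^j ≥ κ Id, κ > 0), then the operator P = Σ_{j=0}^{m} (C*)^j C^j is bounded, self-adjoint, satisfies P ≥ Id, and solves the Lyapunov inequality: there exists σ > 0 with ⟨−C x, P x⟩ + ⟨P x, −C x⟩ ≤ −σ‖x‖² for all x ∈ H. -/
/-!
With `P = ∑_{j ≤ m} (C*)^j C^j` one has `⟪y, P x⟫ = ∑_j ⟪C^j y, C^j x⟫`. Taking `y = x` gives
`⟪x, P x⟫ = ∑_j ‖C^j x‖² ≥ ‖x‖²` (the term `j = 0`), and taking `y = C x` and using that `C`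
commutes with `C^j` gives `Re ⟪C x, P x⟫ = ∑_j Re ⟪C^j x, C_H C^j x⟫ ≥ κ ‖x‖²`, since
`Re ⟪C y, y⟫ = Re ⟪y, C_H y⟫`. The Lyapunov form is `-2 Re ⟪C x, P x⟫`, so `σ = 2κ` works.
-/

namespace ContinuousLinearMap

open scoped InnerProductSpace
open RCLike

variable {𝕜 H : Type*} [RCLike 𝕜] [NormedAddCommGroup H] [InnerProductSpace 𝕜 H]
  [CompleteSpace H]

noncomputable def lyapunovOperator (C : H →L[𝕜] H) (m : ℕ) : H →L[𝕜] H :=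
  ∑ j ∈ Finset.range (m + 1), (adjoint C ^ j) ∘L (C ^ j)

lemma adjoint_pow (C : H →L[𝕜] H) (j : ℕ) : adjoint (C ^ j) = adjoint C ^ j := by
  simp only [← star_eq_adjoint, star_pow]

lemma inner_lyapunovOperator_apply (C : H →L[𝕜] H) (m : ℕ) (x y : H) :
    ⟪y, lyapunovOperator C m x⟫_𝕜 = ∑ j ∈ Finset.range (m + 1), ⟪(C ^ j) y, (C ^ j) x⟫_𝕜 := by
  simp only [lyapunovOperator, _root_.sum_apply, inner_sum, comp_apply,
    ← adjoint_pow, adjoint_inner_right]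

lemma isSelfAdjoint_lyapunovOperator (C : H →L[𝕜] H) (m : ℕ) :
    IsSelfAdjoint (lyapunovOperator C m) := by
  refine (isPositive_sum _ fun j _ => ?_).isSelfAdjoint
  simpa only [adjoint_pow] using isPositive_adjoint_comp_self (C ^ j)

lemma norm_sq_le_re_inner_lyapunovOperator (C : H →L[𝕜] H) (m : ℕ) (x : H) :
    ‖x‖ ^ 2 ≤ re ⟪x, lyapunovOperator C m x⟫_𝕜 := by
  have hsum : re ⟪x, lyapunovOperator C m x⟫_𝕜 =
      ∑ j ∈ Finset.range (m + 1), ‖(C ^ j) x‖ ^ 2 := by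
    simp only [inner_lyapunovOperator_apply, map_sum, inner_self_eq_norm_sq]
  rw [hsum]
  simpa using Finset.single_le_sum (f := fun j => ‖(C ^ j) x‖ ^ 2) (fun j _ => sq_nonneg _)
    (Finset.mem_range.2 m.succ_pos)

lemma re_inner_apply_self_eq_re_inner_realPart (C : H →L[𝕜] H) (y : H) :
    re ⟪C y, y⟫_𝕜 = re ⟪y, ((2 : 𝕜)⁻¹ • (C + adjoint C)) y⟫_𝕜 := by
  have hsymm : re ⟪y, C y⟫_𝕜 = re ⟪C y, y⟫_𝕜 := inner_re_symm _ _
  rw [smul_apply, inner_smul_right, add_apply, inner_add_right, adjoint_inner_right,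
    ← ofReal_ofNat, ← ofReal_inv, re_ofReal_mul, map_add, hsymm]
  ring

lemma re_inner_apply_lyapunovOperator (C : H →L[𝕜] H) (m : ℕ) (x : H) :
    re ⟪C x, lyapunovOperator C m x⟫_𝕜 = ∑ j ∈ Finset.range (m + 1),
      re ⟪(C ^ j) x, ((2 : 𝕜)⁻¹ • (C + adjoint C)) ((C ^ j) x)⟫_𝕜 := by
  rw [inner_lyapunovOperator_apply, map_sum]
  refine Finset.sum_congr rfl fun j _ => ?_
  have hcomm : (C ^ j) (C x) = C ((C ^ j) x) :=
    DFunLike.congr_fun (Commute.self_pow C j).eq.symm x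
  rw [← re_inner_apply_self_eq_re_inner_realPart, hcomm]

end ContinuousLinearMap

open scoped ComplexInnerProductSpace
open ContinuousLinearMap

theorem stmt12_general
    {H : Type*} [NormedAddCommGroup H] [InnerProductSpace ℂ H] [CompleteSpace H]
    (C CH : H →L[ℂ] H)
    (hCH : CH = (2 : ℂ)⁻¹ • (C + ContinuousLinearMap.adjoint C))
    (m : ℕ) (κ : ℝ) (hκ : 0 < κ)
    (hhypo : ∀ x : H, κ * ‖x‖ ^ 2 ≤ ∑ j ∈ Finset.range (m + 1), (⟪(C ^ j) x, CH ((C ^ j) x)⟫).re) :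
    IsSelfAdjoint (∑ j ∈ Finset.range (m + 1),
        ((ContinuousLinearMap.adjoint C) ^ j) ∘L (C ^ j))
    ∧ (∀ x : H, ‖x‖ ^ 2
        ≤ (⟪x, (∑ j ∈ Finset.range (m + 1),
            ((ContinuousLinearMap.adjoint C) ^ j) ∘L (C ^ j)) x⟫).re)
    ∧ ∃ σ : ℝ, 0 < σ ∧ ∀ x : H,
        (⟪(-C) x, (∑ j ∈ Finset.range (m + 1),
              ((ContinuousLinearMap.adjoint C) ^ j) ∘L (C ^ j)) x⟫
          + ⟪(∑ j ∈ Finset.range (m + 1),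
              ((ContinuousLinearMap.adjoint C) ^ j) ∘L (C ^ j)) x, (-C) x⟫).re
          ≤ -σ * ‖x‖ ^ 2 := by
  refine ⟨isSelfAdjoint_lyapunovOperator C m, norm_sq_le_re_inner_lyapunovOperator C m,
    2 * κ, by positivity, fun x => ?_⟩
  have hcoercive : κ * ‖x‖ ^ 2 ≤ (⟪C x, lyapunovOperator C m x⟫).re := by
    subst hCH
    exact (hhypo x).trans_eq (re_inner_apply_lyapunovOperator C m x).symm
  have hform : (⟪(-C) x, lyapunovOperator C m x⟫ + ⟪lyapunovOperator C m x, (-C) x⟫).re =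
      -2 * (⟪C x, lyapunovOperator C m x⟫).re := by
    have hswap : (⟪lyapunovOperator C m x, (-C) x⟫).re = (⟪(-C) x, lyapunovOperator C m x⟫).re :=
      inner_re_symm (𝕜 := ℂ) _ _
    rw [Complex.add_re, hswap, neg_apply, inner_neg_left, Complex.neg_re]
    ring
  change (⟪(-C) x, lyapunovOperator C m x⟫ + ⟪lyapunovOperator C m x, (-C) x⟫).re ≤ _
  linarith

/-- If `C ∈ B(H)` is hypocoercive with index `m` (`∑_{j=0}^m (C*)^j C_H C^j ≥ κ Id`,
`κ > 0`, where `C_H = (C+C*)/2 ≥ 0`), then `P = ∑_{j=0}^m (C*)^j C^j` is bounded,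
self-adjoint, `P ≥ Id`, and solves the Lyapunov inequality
`⟨−Cx, Px⟩ + ⟨Px, −Cx⟩ ≤ −σ‖x‖²` for some `σ > 0`. -/
theorem stmt12
    {H : Type*} [NormedAddCommGroup H] [InnerProductSpace ℂ H] [CompleteSpace H]
    (C CH : H →L[ℂ] H)
    (hCH : CH = (2 : ℂ)⁻¹ • (C + ContinuousLinearMap.adjoint C))
    (haccr : ∀ x : H, 0 ≤ (⟪x, CH x⟫).re)
    (m : ℕ) (κ : ℝ) (hκ : 0 < κ)
    (hhypo : ∀ x : H, κ * ‖x‖ ^ 2 ≤ ∑ j ∈ Finset.range (m + 1), (⟪(C ^ j) x, CH ((C ^ j) x)⟫).re) :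
    IsSelfAdjoint (∑ j ∈ Finset.range (m + 1),
        ((ContinuousLinearMap.adjoint C) ^ j) ∘L (C ^ j))
    ∧ (∀ x : H, ‖x‖ ^ 2
        ≤ (⟪x, (∑ j ∈ Finset.range (m + 1),
            ((ContinuousLinearMap.adjoint C) ^ j) ∘L (C ^ j)) x⟫).re)
    ∧ ∃ σ : ℝ, 0 < σ ∧ ∀ x : H,
        (⟪(-C) x, (∑ j ∈ Finset.range (m + 1),
              ((ContinuousLinearMap.adjoint C) ^ j) ∘L (C ^ j)) x⟫
          + ⟪(∑ j ∈ Finset.range (m + 1),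
              ((ContinuousLinearMap.adjoint C) ^ j) ∘L (C ^ j)) x, (-C) x⟫).re
          ≤ -σ * ‖x‖ ^ 2 :=
  stmt12_general C CH hCH m κ hκ hhypo
end
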